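/- Let m ∈ ℂ be nonzero, y ∈ ℂ, A = [[m, 1],[0, m^{-1}]], B = [[m, 0],[y - m² - m^{-2}, m^{-1}]], U = (A^{-1}B^{-1})^n (AB)^n with u = tr(U), and W = (AB)^n U^p for positive integers n, p. Then the (1,2)-entry of W equals (m^{-1}·S_p(u) - m·S_{p-1}(u))·S_{n-1}(y). -/
import Mathlib
set_option linter.unreachableTactic false
set_option linter.unusedTactic false

private lemma CH2 (M : Matrix (Fin 2) (Fin 2) ℂ) (h : M.det = 1) :
    M * M = Matrix.trace M • M - 1 := by
  rw [Matrix.det_fin_two] at h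
  ext i j
  fin_cases i <;> fin_cases j <;>
    simp [Matrix.mul_apply, Fin.sum_univ_two, Matrix.trace_fin_two,
      Matrix.sub_apply, Matrix.one_apply, smul_eq_mul] <;>
    (first | ring1 | linear_combination h | linear_combination -h)

private lemma pow_formula (S : ℤ → ℂ → ℂ)
    (hS0 : ∀ z, S 0 z = 1) (hS1 : ∀ z, S 1 z = z)
    (hS : ∀ (k : ℤ) (z : ℂ), S k z = z * S (k - 1) z - S (k - 2) z)
    (M : Matrix (Fin 2) (Fin 2) ℂ) (h : M.det = 1) :
    ∀ k : ℕ, M ^ (k + 1)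
      = S k (Matrix.trace M) • M - S ((k : ℤ) - 1) (Matrix.trace M) • 1 := by
  have hSm1 : ∀ z, S (-1) z = 0 := by
    intro z
    have h1 := hS 1 z
    norm_num at h1
    rw [hS1, hS0] at h1
    linear_combination h1
  have hCH := CH2 M h
  intro k
  induction k with
  | zero => simp [hS0, hSm1]
  | succ k ih =>
    have hrec := hS ((k : ℤ) + 1) (Matrix.trace M)
    norm_num at hrec
    have e2 : ((k : ℤ) + 1 - 2) = (k : ℤ) - 1 := by ring
    rw [e2] at hrec
    calc M ^ (k + 1 + 1) = M ^ (k + 1) * M := by rw [pow_succ]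
    _ = (S k (Matrix.trace M) • M - S ((k : ℤ) - 1) (Matrix.trace M) • 1) * M := by
        rw [ih]
    _ = S k (Matrix.trace M) • (M * M) - S ((k : ℤ) - 1) (Matrix.trace M) • M := by
        rw [sub_mul, smul_mul_assoc, smul_mul_assoc, one_mul]
    _ = S k (Matrix.trace M) • (Matrix.trace M • M - 1)
          - S ((k : ℤ) - 1) (Matrix.trace M) • M := by rw [hCH]
    _ = S ((k : ℤ) + 1) (Matrix.trace M) • M - S k (Matrix.trace M) • 1 := by
        rw [hrec]; rw [smul_sub, smul_smul, sub_smul]; ring_nf; abel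
    _ = S ((k + 1 : ℕ) : ℤ) (Matrix.trace M) • M
          - S (((k + 1 : ℕ) : ℤ) - 1) (Matrix.trace M) • 1 := by push_cast; ring_nf

theorem W_12_entry
    (S : ℤ → ℂ → ℂ)
    (hS0 : ∀ z, S 0 z = 1) (hS1 : ∀ z, S 1 z = z)
    (hS : ∀ (k : ℤ) (z : ℂ), S k z = z * S (k - 1) z - S (k - 2) z)
    (m y : ℂ) (hm : m ≠ 0)
    (A B : Matrix (Fin 2) (Fin 2) ℂ)
    (hA : A = !![m, 1; 0, m⁻¹])
    (hB : B = !![m, 0; y - m ^ 2 - m⁻¹ ^ 2, m⁻¹])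
    (n p : ℕ) (hn : 0 < n) (hp : 0 < p)
    (U : Matrix (Fin 2) (Fin 2) ℂ) (hU : U = (A⁻¹ * B⁻¹) ^ n * (A * B) ^ n)
    (u : ℂ) (hu : u = Matrix.trace U)
    (W : Matrix (Fin 2) (Fin 2) ℂ) (hW : W = (A * B) ^ n * U ^ p) :
    W 0 1 = (m⁻¹ * S p u - m * S ((p : ℤ) - 1) u) * S ((n : ℤ) - 1) y := by
  obtain ⟨n', rfl⟩ : ∃ n', n = n' + 1 := ⟨n - 1, (Nat.succ_pred_eq_of_pos hn).symm⟩
  obtain ⟨p', rfl⟩ : ∃ p', p = p' + 1 := ⟨p - 1, (Nat.succ_pred_eq_of_pos hp).symm⟩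
  have hmm : m * m⁻¹ = 1 := mul_inv_cancel₀ hm
  -- explicit inverses
  have hAinv : A⁻¹ = !![m⁻¹, -1; 0, m] := by
    apply Matrix.inv_eq_right_inv
    rw [hA]
    ext i j
    fin_cases i <;> fin_cases j <;>
      simp [Matrix.mul_apply, Fin.sum_univ_two, Matrix.one_apply] <;>
      (first | ring1 | linear_combination hmm | linear_combination -hmm |
        linear_combination (y - m⁻¹ ^ 2) * hmm | linear_combination (y - m ^ 2) * hmm |
        (field_simp; ring))
  have hBinv : B⁻¹ = !![m⁻¹, 0; -(y - m ^ 2 - m⁻¹ ^ 2), m] := by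
    apply Matrix.inv_eq_right_inv
    rw [hB]
    ext i j
    fin_cases i <;> fin_cases j <;>
      simp [Matrix.mul_apply, Fin.sum_univ_two, Matrix.one_apply] <;>
      (first | ring1 | linear_combination hmm | linear_combination -hmm |
        linear_combination (y - m⁻¹ ^ 2) * hmm | linear_combination (y - m ^ 2) * hmm |
        (field_simp; ring))
  -- explicit products
  have hAB : A * B = !![y - m⁻¹ ^ 2, m⁻¹; m⁻¹ * (y - m ^ 2 - m⁻¹ ^ 2), m⁻¹ ^ 2] := by
    rw [hA, hB]
    ext i j
    fin_cases i <;> fin_cases j <;>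
      simp [Matrix.mul_apply, Fin.sum_univ_two] <;>
      (first | ring1 | linear_combination hmm | linear_combination -hmm |
        linear_combination (y - m⁻¹ ^ 2) * hmm | linear_combination (y - m ^ 2) * hmm |
        (field_simp; ring))
  have hE : A⁻¹ * B⁻¹ = !![y - m ^ 2, -m; -(m * (y - m ^ 2 - m⁻¹ ^ 2)), m ^ 2] := by
    rw [hAinv, hBinv]
    ext i j
    fin_cases i <;> fin_cases j <;>
      simp [Matrix.mul_apply, Fin.sum_univ_two] <;>
      (first | ring1 | linear_combination hmm | linear_combination -hmm |
        linear_combination (y - m⁻¹ ^ 2) * hmm | linear_combination (y - m ^ 2) * hmm |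
        (field_simp; ring))
  -- determinants
  have hdA : A.det = 1 := by rw [hA, Matrix.det_fin_two_of]; linear_combination hmm
  have hdB : B.det = 1 := by rw [hB, Matrix.det_fin_two_of]; linear_combination hmm
  have hdAB : (A * B).det = 1 := by rw [Matrix.det_mul, hdA, hdB, one_mul]
  have hdE : (A⁻¹ * B⁻¹).det = 1 := by
    rw [Matrix.det_mul, Matrix.det_nonsing_inv, Matrix.det_nonsing_inv, hdA, hdB]
    norm_num
  have hdU : U.det = 1 := by
    rw [hU, Matrix.det_mul, Matrix.det_pow, Matrix.det_pow, hdE, hdAB]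
    norm_num
  -- traces
  have htAB : Matrix.trace (A * B) = y := by
    rw [hAB, Matrix.trace_fin_two_of]; ring
  have htE : Matrix.trace (A⁻¹ * B⁻¹) = y := by
    rw [hE, Matrix.trace_fin_two_of]; ring
  -- power formulas
  have hABn := pow_formula S hS0 hS1 hS (A * B) hdAB n'
  rw [htAB] at hABn
  have hEn := pow_formula S hS0 hS1 hS (A⁻¹ * B⁻¹) hdE n'
  rw [htE] at hEn
  have hUp := pow_formula S hS0 hS1 hS U hdU p'
  rw [← hu] at hUp
  -- the Pell-type relation (determinant of (AB)^(n'+1) is 1)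
  have hd : ((A * B) ^ (n' + 1)).det = 1 := by
    rw [Matrix.det_pow, hdAB, one_pow]
  rw [hABn, hAB] at hd
  rw [Matrix.det_fin_two] at hd
  simp only [Matrix.sub_apply, Matrix.smul_apply, Matrix.one_apply, smul_eq_mul,
    Matrix.cons_val', Matrix.cons_val_zero, Matrix.cons_val_one, Matrix.head_cons,
    Matrix.head_fin_const, Matrix.empty_val', Matrix.cons_val_fin_one,
    Matrix.of_apply] at hd
  norm_num at hd
  -- explicit form of u
  have hu' := hu
  rw [hU, hEn, hABn, hE, hAB] at hu'
  rw [Matrix.trace_fin_two] at hu'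
  simp only [Matrix.mul_apply, Fin.sum_univ_two, Matrix.sub_apply, Matrix.smul_apply,
    Matrix.one_apply, smul_eq_mul, Matrix.cons_val', Matrix.cons_val_zero,
    Matrix.cons_val_one, Matrix.head_cons, Matrix.head_fin_const,
    Matrix.empty_val', Matrix.cons_val_fin_one, Matrix.of_apply] at hu'
  norm_num at hu'
  -- recursion for S at p'+1
  have hZ := hS ((p' : ℤ) + 1) u
  have e1 : ((p' : ℤ) + 1 - 1) = (p' : ℤ) := by ring
  have e2 : ((p' : ℤ) + 1 - 2) = (p' : ℤ) - 1 := by ring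
  rw [e1, e2] at hZ
  -- normalize casts in the goal
  have en : (((n' + 1 : ℕ) : ℤ) - 1) = (n' : ℤ) := by push_cast; ring
  have ep : (((p' + 1 : ℕ) : ℤ) - 1) = (p' : ℤ) := by push_cast; ring
  have ep' : (((p' + 1 : ℕ) : ℤ)) = (p' : ℤ) + 1 := by push_cast; ring
  rw [en, ep, ep']
  -- expand W entry
  rw [hW, hABn, hUp, hU, hEn, hABn, hE, hAB]
  simp only [Matrix.mul_apply, Fin.sum_univ_two, Matrix.sub_apply, Matrix.smul_apply,
    Matrix.one_apply, smul_eq_mul, Matrix.cons_val', Matrix.cons_val_zero,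
    Matrix.cons_val_one, Matrix.head_cons, Matrix.head_fin_const,
    Matrix.empty_val', Matrix.cons_val_fin_one, Matrix.of_apply]
  norm_num
  linear_combination (-(m * S (n' : ℤ) y * S (p' : ℤ) u)) * hd +
    (-(m⁻¹ * S (n' : ℤ) y)) * hZ +
    (-(m⁻¹ * S (n' : ℤ) y * S (p' : ℤ) u)) * hu'
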